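/- For every r > 0 and θ ∈ (0,π), the function r ↦ p(r,θ) is differentiable and ∂p/∂r(r,θ) + g·ρ(r,θ) = (1/r)·(F(r·sin θ) + r·sin θ·𝓕(r·sin θ, θ)) = U(r,θ)/r. -/

import Mathlib

/-- The characteristic curve `s ↦ θ̄(s)`. -/
noncomputable def thetaBar (s : ℝ) : ℝ :=
  Real.arccos ((1 - Real.exp (2 * s)) / (1 + Real.exp (2 * s)))

/-- The function `f(θ) = ½·ln((1−cos θ)/(1+cos θ))`. -/
noncomputable def fChar (θ : ℝ) : ℝ :=
  (1 / 2) * Real.log ((1 - Real.cos θ) / (1 + Real.cos θ))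

/-- `𝓕(ξ,θ) = ∫₀^{f(θ)} g·ρ_θ(ξ·(e^s+e^{−s})/2, θ̄(s)) ds`. -/
noncomputable def calF (g : ℝ) (ρθ : ℝ → ℝ → ℝ) (ξ θ : ℝ) : ℝ :=
  ∫ s in (0:ℝ)..(fChar θ),
    g * ρθ (ξ * (Real.exp s + Real.exp (-s)) / 2) (thetaBar s)

/-- `U(r,θ) = F(r·sin θ) + r·sin θ·𝓕(r·sin θ, θ)`. -/
noncomputable def UU (g : ℝ) (ρθ : ℝ → ℝ → ℝ) (F : ℝ → ℝ) (r θ : ℝ) : ℝ :=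
  F (r * Real.sin θ) + r * Real.sin θ * calF g ρθ (r * Real.sin θ) θ

/-- The pressure
`p(r,θ) = b − g·∫_a^r ρ(s,θ) ds + ∫_{a sin θ}^{r sin θ} (F(s)/s + 𝓕(s,θ)) ds
  + ∫_{π/2}^{θ} (F(a sin s)·cot s + 𝓕(a sin s, s)·a·cos s) ds`. -/
noncomputable def pres (g a b : ℝ) (ρ ρθ : ℝ → ℝ → ℝ) (F : ℝ → ℝ) (r θ : ℝ) : ℝ :=
  b - g * (∫ s in a..r, ρ s θ)
    + (∫ s in (a * Real.sin θ)..(r * Real.sin θ), (F s / s + calF g ρθ s θ))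
    + ∫ s in (Real.pi / 2)..θ,
        (F (a * Real.sin s) * Real.cot s + calF g ρθ (a * Real.sin s) s * a * Real.cos s)

/-!
Only the first two summands of `p` depend on `r`. By the fundamental theorem of calculus their
`r`-derivatives are `-g ρ(r,θ)` and `sin θ · (F(r sin θ)/(r sin θ) + 𝓕(r sin θ, θ))`, which is
`U(r,θ)/r`. The integrands are continuous on `(0,∞)`: for `𝓕` this is continuity of a parametric
integral, which needs `ρ_θ` continuous, and that follows from `ρ ∈ C¹`.
-/

open Set

theorem continuous_thetaBar : Continuous thetaBar :=
  Real.continuous_arccos.comp <| Continuous.div (by fun_prop) (by fun_prop)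
    fun s => (add_pos one_pos (Real.exp_pos (2 * s))).ne'

theorem thetaBar_mem_Ioo (s : ℝ) : thetaBar s ∈ Ioo 0 Real.pi := by
  have hd : 0 < 1 + Real.exp (2 * s) := add_pos one_pos (Real.exp_pos _)
  have he := Real.exp_pos (2 * s)
  refine ⟨?_, (Real.arccos_le_pi _).lt_of_ne fun h => ?_⟩
  · rw [thetaBar, Real.arccos_pos, div_lt_one hd]
    linarith
  · have := Real.arccos_eq_pi.mp h
    rw [div_le_iff₀ hd] at this
    linarith

theorem ContDiffOn.continuousOn_partialDeriv_snd {𝕜 E F : Type*} [NontriviallyNormedField 𝕜]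
    [NormedAddCommGroup E] [NormedSpace 𝕜 E] [NormedAddCommGroup F] [NormedSpace 𝕜 F]
    {f f₂ : E → 𝕜 → F} {U : Set (E × 𝕜)} (hU : IsOpen U)
    (hf : ContDiffOn 𝕜 1 (fun q : E × 𝕜 => f q.1 q.2) U)
    (hf₂ : ∀ q ∈ U, HasDerivAt (f q.1) (f₂ q.1 q.2) q.2) :
    ContinuousOn (fun q : E × 𝕜 => f₂ q.1 q.2) U := by
  have hD := hf.continuousOn_fderiv_of_isOpen hU le_rfl
  refine (hD.clm_apply (continuousOn_const (c := ((0 : E), (1 : 𝕜))))).congr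
    fun ⟨x, y⟩ hq => ?_
  have hline : HasDerivAt (fun t : 𝕜 => (x, t)) ((0 : E), (1 : 𝕜)) y :=
    (hasDerivAt_const y x).prodMk (hasDerivAt_id y)
  have hslice : HasDerivAt (f x)
      (fderiv 𝕜 (fun q : E × 𝕜 => f q.1 q.2) (x, y) ((0 : E), (1 : 𝕜))) y :=
    ((hf.contDiffAt (hU.mem_nhds hq)).differentiableAt one_ne_zero).hasFDerivAt.comp_hasDerivAt
      y hline
  exact (hf₂ (x, y) hq).unique hslice

theorem continuousOn_parametric_intervalIntegral_of_continuousOn_Ioi {E : Type*}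
    [NormedAddCommGroup E] [NormedSpace ℝ E] {f : ℝ → ℝ → E} {c : ℝ}
    (hf : ContinuousOn (Function.uncurry f) (Ioi c ×ˢ univ)) (a b : ℝ) :
    ContinuousOn (fun x => ∫ t in a..b, f x t) (Ioi c) := by
  intro x₀ (hx₀ : c < x₀)
  obtain ⟨d, hcd, hdx⟩ := exists_between hx₀
  -- Clamping the parameter below at `d > c` gives a globally continuous integrand that agrees
  -- with `f` near `x₀`.
  have hclamp : Continuous (Function.uncurry fun x t => f (max x d) t) := by
    refine hf.comp_continuous ((continuous_fst.max continuous_const).prodMk continuous_snd)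
      fun q => ⟨?_, mem_univ _⟩
    exact hcd.trans_le (le_max_right _ _)
  refine ContinuousAt.continuousWithinAt <|
    (intervalIntegral.continuous_parametric_intervalIntegral_of_continuous'
      (μ := MeasureTheory.volume) hclamp a b
      |>.continuousAt).congr ?_
  filter_upwards [Ioi_mem_nhds hdx] with x (hx : d < x)
  rw [max_eq_left hx.le]

theorem continuousOn_calF (g : ℝ) {ρθ : ℝ → ℝ → ℝ}
    (hρθ : ContinuousOn (fun q : ℝ × ℝ => ρθ q.1 q.2) (Ioi 0 ×ˢ Ioo 0 Real.pi)) (θ : ℝ) :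
    ContinuousOn (fun ξ => calF g ρθ ξ θ) (Ioi 0) := by
  refine continuousOn_parametric_intervalIntegral_of_continuousOn_Ioi ?_ _ _
  refine continuousOn_const.mul <| hρθ.comp
    (f := fun q : ℝ × ℝ => (q.1 * (Real.exp q.2 + Real.exp (-q.2)) / 2, thetaBar q.2))
    (Continuous.continuousOn ?_) fun q hq => ?_
  · exact (by fun_prop : Continuous fun q : ℝ × ℝ => q.1 * (Real.exp q.2 + Real.exp (-q.2)) / 2)
      |>.prodMk (continuous_thetaBar.comp continuous_snd)
  · exact ⟨div_pos (mul_pos hq.1 (add_pos (Real.exp_pos _) (Real.exp_pos _))) two_pos,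
      thetaBar_mem_Ioo q.2⟩

theorem hasDerivAt_intervalIntegral_of_continuousOn {E : Type*} [NormedAddCommGroup E]
    [NormedSpace ℝ E] [CompleteSpace E] {f : ℝ → E} {U : Set ℝ} (hU : IsOpen U)
    [U.OrdConnected] (hf : ContinuousOn f U) {a x : ℝ} (ha : a ∈ U) (hx : x ∈ U) :
    HasDerivAt (fun y => ∫ t in a..y, f t) (f x) x :=
  intervalIntegral.integral_hasDerivAt_right
    ((hf.mono (OrdConnected.uIcc_subset ‹_› ha hx)).intervalIntegrable)
    (hf.stronglyMeasurableAtFilter hU x hx) (hf.continuousAt (hU.mem_nhds hx))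

theorem pressure_deriv_r_general (g a b : ℝ) (ha : 0 < a)
    (ρ ρθ : ℝ → ℝ → ℝ)
    (hρ : ContDiffOn ℝ 1 (fun q : ℝ × ℝ => ρ q.1 q.2)
      (Set.Ioi 0 ×ˢ Set.Ioo 0 Real.pi))
    (hρθ : ∀ r ∈ Set.Ioi (0:ℝ), ∀ t ∈ Set.Ioo 0 Real.pi,
      HasDerivAt (fun u => ρ r u) (ρθ r t) t)
    (F : ℝ → ℝ) (hF : ContinuousOn F (Set.Ioi 0))
    (r θ : ℝ) (hr : 0 < r) (hθ : θ ∈ Set.Ioo 0 Real.pi) :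
    HasDerivAt (fun r' => pres g a b ρ ρθ F r' θ)
      (1 / r * (F (r * Real.sin θ) + r * Real.sin θ * calF g ρθ (r * Real.sin θ) θ)
        - g * ρ r θ) r ∧
    1 / r * (F (r * Real.sin θ) + r * Real.sin θ * calF g ρθ (r * Real.sin θ) θ)
      = UU g ρθ F r θ / r := by
  have hsin : 0 < Real.sin θ := Real.sin_pos_of_pos_of_lt_pi hθ.1 hθ.2
  have hρθ_cont := hρ.continuousOn_partialDeriv_snd (isOpen_Ioi.prod isOpen_Ioo)
    fun q hq => hρθ q.1 hq.1 q.2 hq.2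
  have hρ_cont : ContinuousOn (fun s => ρ s θ) (Ioi 0) :=
    hρ.continuousOn.comp (by fun_prop) fun s hs => mk_mem_prod hs hθ
  have hG_cont : ContinuousOn (fun s => F s / s + calF g ρθ s θ) (Ioi 0) :=
    (hF.div continuousOn_id fun s hs => ne_of_gt hs).add (continuousOn_calF g hρθ_cont θ)
  have hρ_int := hasDerivAt_intervalIntegral_of_continuousOn isOpen_Ioi hρ_cont ha hr
  have hG_int := (hasDerivAt_intervalIntegral_of_continuousOn isOpen_Ioi hG_cont
    (mul_pos ha hsin) (mul_pos hr hsin)).comp r ((hasDerivAt_id r).mul_const (Real.sin θ))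
  refine ⟨(((hasDerivAt_const r b).sub (hρ_int.const_mul g)).add hG_int).add_const _
    |>.congr_deriv ?_, by rw [UU, one_div_mul_eq_div]⟩
  field_simp
  ring

/-- For every `r > 0`, `θ ∈ (0,π)` the map `r ↦ p(r,θ)` is differentiable and
`p_r(r,θ) + g·ρ(r,θ) = (1/r)·(F(r sin θ) + r sin θ·𝓕(r sin θ,θ)) = U(r,θ)/r`. -/
theorem pressure_deriv_r (g a b : ℝ) (hg : 0 < g) (ha : 0 < a)
    (ρ ρθ : ℝ → ℝ → ℝ)
    (hρ : ContDiffOn ℝ 1 (fun q : ℝ × ℝ => ρ q.1 q.2)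
      (Set.Ioi 0 ×ˢ Set.Ioo 0 Real.pi))
    (hρθ : ∀ r ∈ Set.Ioi (0:ℝ), ∀ t ∈ Set.Ioo 0 Real.pi,
      HasDerivAt (fun u => ρ r u) (ρθ r t) t)
    (F : ℝ → ℝ) (hF : ContinuousOn F (Set.Ioi 0))
    (r θ : ℝ) (hr : 0 < r) (hθ : θ ∈ Set.Ioo 0 Real.pi) :
    HasDerivAt (fun r' => pres g a b ρ ρθ F r' θ)
      (1 / r * (F (r * Real.sin θ) + r * Real.sin θ * calF g ρθ (r * Real.sin θ) θ)
        - g * ρ r θ) r ∧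
    1 / r * (F (r * Real.sin θ) + r * Real.sin θ * calF g ρθ (r * Real.sin θ) θ)
      = UU g ρθ F r θ / r :=
  pressure_deriv_r_general g a b ha ρ ρθ hρ hρθ F hF r θ hr hθ
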